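/- Let n ∈ ℕ with n ≥ 2, let H ⊆ ℝ with |H| ≥ n+1, let ω = (ω₁, …, ω_n) : H → ℝⁿ be an n-dimensional positive Chebyshev system over H such that ω_{⟨n−1⟩} is an (n−1)-dimensional positive Chebyshev system over H, and let f : H → ℝ. Then f is ω-convex if and only if for each (n−1)-tuple x₁ < … < x_{n−1} in H, the function x ↦ [x₁, …, x_{n−1}, x; f]_ω is nondecreasing on H ∖ {x₁, …, x_{n−1}}. -/

import Mathlib

/-- `Φ_ω(x₁,…,x_m) = det(ω_i(x_j))`. -/
noncomputable def Phi {m : ℕ} (ω : Fin m → ℝ → ℝ) (x : Fin m → ℝ) : ℝ :=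
  Matrix.det (Matrix.of fun i j => ω i (x j))

def IsPosChebyshev {m : ℕ} (ω : Fin m → ℝ → ℝ) (H : Set ℝ) : Prop :=
  ∀ x : Fin m → ℝ, (∀ i, x i ∈ H) → StrictMono x → 0 < Phi ω x

def IsConvexWRT {m : ℕ} (ω : Fin m → ℝ → ℝ) (S : Set ℝ) (f : ℝ → ℝ) : Prop :=
  ∀ x : Fin (m + 1) → ℝ, (∀ i, x i ∈ S) → StrictMono x → 0 ≤ Phi (Fin.snoc ω f) x

/-- The generalized divided difference `[x₁,…,x_k; f]_{ω⟨k⟩}`: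
the numerator replaces the last function `ω_k` by `f`. -/
noncomputable def divDiff {k : ℕ} (ω : Fin k → ℝ → ℝ) (f : ℝ → ℝ) (x : Fin k → ℝ) : ℝ :=
  Phi (fun i => if (i : ℕ) + 1 = k then f else ω i) x / Phi ω x

/-!
Sort `n + 1` points `z₀ < ⋯ < zₙ` of `H` and write `z⁽ᵗ⁾` for the tuple with `z_t` removed.
For `j < k`, the Desnanot–Jacobi identity (rows `ωₙ, f`, columns `j, k`) gives
`Φ_{(ω,f)}(z) · Φ_{ω⟨n-1⟩}(z⁽ʲᵏ⁾) = Φ_ω(z⁽ʲ⁾) Φ_ω(z⁽ᵏ⁾) ([z⁽ʲ⁾; f]_ω - [z⁽ᵏ⁾; f]_ω)`,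
and all the `Φ`-factors on the right and the second one on the left are positive. Hence
`Φ_{(ω,f)}(z) ≥ 0` iff `[z⁽ᵏ⁾; f]_ω ≤ [z⁽ʲ⁾; f]_ω`. Since divided differences are symmetric,
`z⁽ᵏ⁾` and `z⁽ʲ⁾` are `(x, z_j)` and `(x, z_k)` for the common points `x`, which is the
monotonicity statement.
-/

namespace Matrix

variable {R : Type*} [CommRing R]

noncomputable def detSnocLinear {p : ℕ} (V : Fin p → Fin (p + 1) → R) :
    (Fin (p + 1) → R) →ₗ[R] R :=
  (detRowAlternating : (Fin (p + 1) → R) [⋀^Fin (p + 1)]→ₗ[R] R).toLinearMap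
    (Fin.snoc V 0) (Fin.last p)

theorem detSnocLinear_apply {p : ℕ} (V : Fin p → Fin (p + 1) → R) (v : Fin (p + 1) → R) :
    detSnocLinear V v = (of (Fin.snoc V v)).det := by
  simp only [detSnocLinear, MultilinearMap.toLinearMap_apply, Fin.update_snoc_last,
    AlternatingMap.coe_multilinearMap]
  rfl

theorem linearMap_eq_zero_of_apply_rows {ι M : Type*} [Fintype ι] [DecidableEq ι]
    [AddCommMonoid M] [Module R M] {B : Matrix ι ι R} (hB : IsUnit B.det)
    {L : (ι → R) →ₗ[R] M} (h : ∀ i, L (B i) = 0) : L = 0 := by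
  refine LinearMap.ext fun v => ?_
  rw [← vecMul_one v, ← nonsing_inv_mul B hB, ← vecMul_vecMul, vecMul_eq_sum]
  simp [h]

theorem det_snoc_self {p : ℕ} (V : Fin p → Fin (p + 1) → R) (i : Fin p) :
    (of (Fin.snoc V (V i))).det = 0 :=
  det_zero_of_row_eq (Fin.castSucc_lt_last i).ne (by funext c; simp)

theorem det_snoc_castSucc {p : ℕ} (V : Fin (p + 1) → Fin (p + 1) → R) (i : Fin (p + 1)) :
    (of (Fin.snoc (fun r => V r.castSucc) (V i))).det =
      if i = Fin.last p then (of V).det else 0 := by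
  induction i using Fin.lastCases with
  | last => rw [if_pos rfl]; exact congrArg (det ∘ of) (Fin.snoc_init_self V)
  | cast i => rw [if_neg (Fin.castSucc_lt_last i).ne]; exact det_snoc_self _ i

theorem det_snoc_single {p : ℕ} (V : Fin p → Fin (p + 1) → R) (t : Fin (p + 1)) :
    (of (Fin.snoc V (Pi.single t 1))).det =
      (-1) ^ (p + t.1) * (of fun i => V i ∘ t.succAbove).det := by
  rw [det_succ_row _ (Fin.last p), Finset.sum_eq_single t]
  · simp [Fin.succAbove_last, submatrix, Function.comp_def]
  · intro c _ hc
    simp [Pi.single_eq_of_ne hc]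
  · simp

/-- Desnanot–Jacobi for the last two rows `W (last q), v` of `[W; v]` and the columns `j < k`.
Both sides are linear in `v`, and they agree on the rows of `W` and on `Pi.single j 1`, which
form a basis because the minor at `j` is a unit. -/
theorem det_snoc_mul_det_eq_sub {q : ℕ} (W : Fin (q + 1) → Fin (q + 2) → R)
    (v : Fin (q + 2) → R) {j k : Fin (q + 2)} (hjk : j < k)
    (hj : IsUnit (of fun i => W i ∘ j.succAbove).det) :
    (of (Fin.snoc W v)).det * (of fun i =>
        W i.castSucc ∘ k.succAbove ∘ (j.castPred (Fin.ne_last_of_lt hjk)).succAbove).det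
      = (of (Fin.snoc (fun i => W i.castSucc ∘ j.succAbove) (v ∘ j.succAbove))).det *
          (of fun i => W i ∘ k.succAbove).det
        - (of (Fin.snoc (fun i => W i.castSucc ∘ k.succAbove) (v ∘ k.succAbove))).det *
          (of fun i => W i ∘ j.succAbove).det := by
  set J := j.castPred (Fin.ne_last_of_lt hjk)
  set C := (of fun i => W i.castSucc ∘ k.succAbove ∘ J.succAbove).det
  set Dj := (of fun i => W i ∘ j.succAbove).det
  set Dk := (of fun i => W i ∘ k.succAbove).det
  let L : (Fin (q + 2) → R) →ₗ[R] R := C • detSnocLinear W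
    - Dk • (detSnocLinear (fun i => W i.castSucc ∘ j.succAbove) ∘ₗ
      LinearMap.funLeft R R j.succAbove)
    + Dj • (detSnocLinear (fun i => W i.castSucc ∘ k.succAbove) ∘ₗ
      LinearMap.funLeft R R k.succAbove)
  have hL : ∀ u, L u = C * (of (Fin.snoc W u)).det
      - Dk * (of (Fin.snoc (fun i => W i.castSucc ∘ j.succAbove) (u ∘ j.succAbove))).det
      + Dj * (of (Fin.snoc (fun i => W i.castSucc ∘ k.succAbove) (u ∘ k.succAbove))).det :=
    fun u => by
      simp only [L, LinearMap.add_apply, LinearMap.sub_apply, LinearMap.smul_apply,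
        LinearMap.comp_apply, detSnocLinear_apply, smul_eq_mul]
      rfl
  have hrow : ∀ i, L (W i) = 0 := fun i => by
    rw [hL, det_snoc_self, det_snoc_castSucc (fun r => W r ∘ j.succAbove),
      det_snoc_castSucc (fun r => W r ∘ k.succAbove)]
    split_ifs <;> ring
  have hsingle : L (Pi.single j 1) = 0 := by
    have hj0 : (Pi.single j 1 : Fin (q + 2) → R) ∘ j.succAbove = 0 := by
      funext c; simp
    have hkJ : (Pi.single j 1 : Fin (q + 2) → R) ∘ k.succAbove = Pi.single J 1 := by
      rw [← Fin.succAbove_castPred_of_lt k j hjk]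
      funext c
      simp [Pi.single_apply, (Fin.succAbove_right_injective (p := k)).eq_iff, J]
    have hzero : (of (Fin.snoc (fun i => W i.castSucc ∘ j.succAbove) 0)).det = 0 :=
      det_eq_zero_of_row_eq_zero (Fin.last q) fun c => by simp
    have hWj : (of (Fin.snoc W (Pi.single j 1))).det = (-1) ^ (q + 1 + j.1) * Dj :=
      det_snoc_single W j
    have hWk : (of (Fin.snoc (fun i => W i.castSucc ∘ k.succAbove) (Pi.single J 1))).det
        = (-1) ^ (q + j.1) * C :=
      det_snoc_single _ J
    rw [hL, hj0, hkJ, hzero, hWj, hWk]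
    ring
  have hB : IsUnit (of (Fin.snoc W (Pi.single j 1))).det := by
    rw [det_snoc_single]
    exact (isUnit_neg_one.pow _).mul hj
  have hL0 : L = 0 := linearMap_eq_zero_of_apply_rows hB fun i => by
    change L (Fin.snoc (α := fun _ => Fin (q + 2) → R) W (Pi.single j 1) i) = 0
    induction i using Fin.lastCases with
    | last => rw [Fin.snoc_last]; exact hsingle
    | cast i => rw [Fin.snoc_castSucc]; exact hrow i
  have := hL v
  rw [hL0, LinearMap.zero_apply] at this
  linear_combination -this

end Matrix

open Matrix Function Set

theorem Phi_snoc {m : ℕ} (ω : Fin m → ℝ → ℝ) (f : ℝ → ℝ) (z : Fin (m + 1) → ℝ) :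
    Phi (Fin.snoc ω f) z = (of (Fin.snoc (fun i c => ω i (z c)) (f ∘ z))).det := by
  unfold Phi
  congr 1
  ext i c
  induction i using Fin.lastCases <;> simp

theorem Phi_comp_perm {N : ℕ} (ω : Fin N → ℝ → ℝ) (x : Fin N → ℝ) (σ : Equiv.Perm (Fin N)) :
    Phi ω (x ∘ σ) = σ.sign * Phi ω x :=
  det_permute' σ (of fun i j => ω i (x j))

theorem divDiff_eq {m : ℕ} (ω : Fin (m + 1) → ℝ → ℝ) (f : ℝ → ℝ) (x : Fin (m + 1) → ℝ) :
    divDiff ω f x = Phi (Fin.snoc (fun i => ω i.castSucc) f) x / Phi ω x := by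
  unfold divDiff
  congr 2
  funext i
  induction i using Fin.lastCases with
  | last => simp
  | cast i => simp [i.isLt.ne]

theorem divDiff_comp_perm {N : ℕ} (ω : Fin N → ℝ → ℝ) (f : ℝ → ℝ) (x : Fin N → ℝ)
    (σ : Equiv.Perm (Fin N)) : divDiff ω f (x ∘ σ) = divDiff ω f x := by
  rw [divDiff, divDiff, Phi_comp_perm, Phi_comp_perm,
    mul_div_mul_left _ _ (Int.cast_ne_zero.2 (Units.ne_zero _))]

theorem divDiff_eq_of_range_eq {N : ℕ} (ω : Fin N → ℝ → ℝ) (f : ℝ → ℝ) {u u' : Fin N → ℝ}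
    (hu : Injective u) (hu' : Injective u') (h : range u = range u') :
    divDiff ω f u = divDiff ω f u' := by
  let σ : Equiv.Perm (Fin N) := (Equiv.ofInjective u' hu').trans
    ((Equiv.setCongr h.symm).trans (Equiv.ofInjective u hu).symm)
  have hσ : u ∘ σ = u' := funext fun i => Equiv.apply_ofInjective_symm hu _
  rw [← hσ, divDiff_comp_perm]

theorem divDiff_comp_succAbove {N : ℕ} (ω : Fin N → ℝ → ℝ) (f : ℝ → ℝ)
    {z : Fin (N + 1) → ℝ} (hz : Injective z) {u : Fin N → ℝ} (hu : Injective u)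
    {t : Fin (N + 1)} (hrange : range z = insert (z t) (range u)) (ht : z t ∉ range u) :
    divDiff ω f (z ∘ t.succAbove) = divDiff ω f u := by
  refine divDiff_eq_of_range_eq ω f (hz.comp Fin.succAbove_right_injective) hu ?_
  rw [range_comp, Fin.range_succAbove, image_compl_eq_range_sdiff_image hz, image_singleton,
    hrange, insert_sdiff_self_of_notMem ht]

theorem Phi_snoc_mul_Phi_eq_sub {m : ℕ} (ω : Fin (m + 1) → ℝ → ℝ) (f : ℝ → ℝ)
    (z : Fin (m + 2) → ℝ) {j k : Fin (m + 2)} (hjk : j < k)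
    (hj : Phi ω (z ∘ j.succAbove) ≠ 0) :
    Phi (Fin.snoc ω f) z * Phi (fun i : Fin m => ω i.castSucc)
        (z ∘ k.succAbove ∘ (j.castPred (Fin.ne_last_of_lt hjk)).succAbove)
      = Phi (Fin.snoc (fun i => ω i.castSucc) f) (z ∘ j.succAbove) * Phi ω (z ∘ k.succAbove) -
        Phi (Fin.snoc (fun i => ω i.castSucc) f) (z ∘ k.succAbove) * Phi ω (z ∘ j.succAbove) := by
  rw [Phi_snoc, Phi_snoc, Phi_snoc]
  exact det_snoc_mul_det_eq_sub (fun i c => ω i (z c)) (f ∘ z) hjk hj.isUnit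

variable {m : ℕ} {H : Set ℝ} {ω : Fin (m + 1) → ℝ → ℝ} {f : ℝ → ℝ}

theorem Phi_snoc_nonneg_iff_divDiff_le (hω : IsPosChebyshev ω H)
    (hinit : IsPosChebyshev (fun i : Fin m => ω i.castSucc) H) {z : Fin (m + 2) → ℝ}
    (hzH : ∀ i, z i ∈ H) (hz : StrictMono z) {j k : Fin (m + 2)} (hjk : j < k) :
    0 ≤ Phi (Fin.snoc ω f) z ↔
      divDiff ω f (z ∘ k.succAbove) ≤ divDiff ω f (z ∘ j.succAbove) := by
  have hD : ∀ t : Fin (m + 2), 0 < Phi ω (z ∘ t.succAbove) := fun t =>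
    hω _ (fun _ => hzH _) (hz.comp (Fin.strictMono_succAbove t))
  have hC := hinit (z ∘ k.succAbove ∘ (j.castPred (Fin.ne_last_of_lt hjk)).succAbove)
    (fun _ => hzH _) (hz.comp ((Fin.strictMono_succAbove k).comp (Fin.strictMono_succAbove _)))
  rw [divDiff_eq, divDiff_eq, div_le_div_iff₀ (hD k) (hD j), ← mul_nonneg_iff_of_pos_right hC,
    Phi_snoc_mul_Phi_eq_sub ω f z hjk (hD j).ne', sub_nonneg]

theorem IsConvexWRT.monotoneOn_divDiff_snoc (hω : IsPosChebyshev ω H)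
    (hinit : IsPosChebyshev (fun i : Fin m => ω i.castSucc) H) (hf : IsConvexWRT ω H f)
    {x : Fin m → ℝ} (hxH : ∀ i, x i ∈ H) (hx : StrictMono x) :
    MonotoneOn (fun y => divDiff ω f (Fin.snoc x y)) (H \ range x) := by
  intro y hy y' hy' hyy'
  rcases hyy'.eq_or_lt with rfl | hlt
  · exact le_rfl
  have hy'y : y' ∉ insert y (range x) := by simp [hlt.ne', hy'.2]
  let w : Fin (m + 2) → ℝ := Fin.snoc (Fin.snoc x y) y'
  have hw : Injective w := Fin.snoc_injective_of_injective
    (Fin.snoc_injective_of_injective hx.injective hy.2) (by simpa using hy'y)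
  let z := w ∘ Tuple.sort w
  have hz : StrictMono z :=
    (Tuple.monotone_sort w).strictMono_of_injective (hw.comp (Tuple.sort w).injective)
  have hrange : range z = insert y' (insert y (range x)) := by
    simp [z, w, EquivLike.range_comp]
  have hzH : ∀ i, z i ∈ H := range_subset_iff.1 <| by
    simp [hrange, insert_subset_iff, hy.1, hy'.1, range_subset_iff.2 hxH]
  obtain ⟨j, hj⟩ : y ∈ range z := by simp [hrange]
  obtain ⟨k, hk⟩ : y' ∈ range z := by simp [hrange]
  have hjk : j < k := hz.lt_iff_lt.1 (hj ▸ hk ▸ hlt)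
  have hk' : divDiff ω f (z ∘ k.succAbove) = divDiff ω f (Fin.snoc x y) :=
    divDiff_comp_succAbove ω f hz.injective (Fin.snoc_injective_of_injective hx.injective hy.2)
      (by rw [hrange, Fin.range_snoc, hk]) (by simpa [hk] using hy'y)
  have hj' : divDiff ω f (z ∘ j.succAbove) = divDiff ω f (Fin.snoc x y') :=
    divDiff_comp_succAbove ω f hz.injective (Fin.snoc_injective_of_injective hx.injective hy'.2)
      (by rw [hrange, Fin.range_snoc, insert_comm, hj]) (by simp [hj, hlt.ne, hy.2])
  simpa only [hk', hj'] using (Phi_snoc_nonneg_iff_divDiff_le hω hinit hzH hz hjk).1 (hf z hzH hz)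

theorem isConvexWRT_of_monotoneOn_divDiff_snoc (hω : IsPosChebyshev ω H)
    (hinit : IsPosChebyshev (fun i : Fin m => ω i.castSucc) H)
    (hf : ∀ x : Fin m → ℝ, (∀ i, x i ∈ H) → StrictMono x →
      MonotoneOn (fun y => divDiff ω f (Fin.snoc x y)) (H \ range x)) :
    IsConvexWRT ω H f := by
  intro z hzH hz
  let x : Fin m → ℝ := fun i => z i.castSucc.castSucc
  have hlt : (Fin.last m).castSucc < Fin.last (m + 1) := Fin.castSucc_lt_last _
  have hk : z ∘ (Fin.last (m + 1)).succAbove = Fin.snoc x (z (Fin.last m).castSucc) := by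
    rw [Fin.succAbove_last]
    exact (Fin.snoc_init_self (z ∘ Fin.castSucc)).symm
  have hj : z ∘ (Fin.last m).castSucc.succAbove = Fin.snoc x (z (Fin.last (m + 1))) := by
    funext c
    induction c using Fin.lastCases <;>
      simp [x, Fin.succAbove_of_castSucc_lt, Fin.succAbove_of_le_castSucc]
  have hnotMem : ∀ {t}, (Fin.last m).castSucc ≤ t → z t ∉ range x := fun ht ⟨i, hi⟩ =>
    (hz (lt_of_lt_of_le (Fin.castSucc_lt_castSucc_iff.2 (Fin.castSucc_lt_last i)) ht)).ne hi
  rw [Phi_snoc_nonneg_iff_divDiff_le hω hinit hzH hz hlt, hk, hj]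
  exact hf x (fun _ => hzH _) (hz.comp (Fin.strictMono_castSucc.comp Fin.strictMono_castSucc))
    ⟨hzH _, hnotMem le_rfl⟩ ⟨hzH _, hnotMem hlt.le⟩ (hz.monotone hlt.le)

/-- Corollary 1 (Wąsowicz), (i) ⇔ (ii): `f` is `ω`-convex if and only if for each
`x₁ < … < x_{n-1}` in `H`, the function `x ↦ [x₁,…,x_{n-1},x; f]_ω` is nondecreasing on
`H \ {x₁,…,x_{n-1}}`. -/
theorem omega_convex_iff_divided_difference_monotone (n : ℕ) (hn : 2 ≤ n) (H : Set ℝ)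
    (ω : Fin n → ℝ → ℝ) (f : ℝ → ℝ)
    (hω : IsPosChebyshev ω H)
    (hω' : IsPosChebyshev (fun i : Fin (n - 1) => ω (Fin.castLE (by omega) i)) H) :
    IsConvexWRT ω H f ↔
      ∀ x : Fin (n - 1) → ℝ, (∀ i, x i ∈ H) → StrictMono x →
        MonotoneOn
          (fun y : ℝ => divDiff ω f (Fin.snoc x y ∘ Fin.cast (by omega : n = n - 1 + 1)))
          (H \ Set.range x) := by
  obtain ⟨m, rfl⟩ : ∃ m, n = m + 1 := ⟨n - 1, by omega⟩
  exact ⟨fun hf x hxH hx => hf.monotoneOn_divDiff_snoc hω hω' hxH hx,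
    isConvexWRT_of_monotoneOn_divDiff_snoc hω hω'⟩
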